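/- arXiv:2106.07677 — 2 statements merged into one kernel-verified Lean document; each statement's English description precedes it below -/
import Mathlib

section
/- Let P be a 2×2×2 family of transition probabilities with entries in (0,1) satisfying the structural constraints P01_0 < P11_0, P01_1 < P11_1, P01_0 < P01_1, and P11_0 < P11_1. Define f(p) = ((1-p)*P01_0 + p*P01_1) / (1 - (1-p)*P11_0 - p*P11_1 + (1-p)*P01_0 + p*P01_1). Then f is monotonically non-decreasing on [0,1]. -/
theorem stmt_2 (P01_0 P01_1 P11_0 P11_1 : ℝ)
    (h01_0 : P01_0 ∈ Set.Ioo (0:ℝ) 1) (h01_1 : P01_1 ∈ Set.Ioo (0:ℝ) 1)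
    (h11_0 : P11_0 ∈ Set.Ioo (0:ℝ) 1) (h11_1 : P11_1 ∈ Set.Ioo (0:ℝ) 1)
    (hsc1 : P01_0 < P11_0) (hsc2 : P01_1 < P11_1)
    (hsc3 : P01_0 < P01_1) (hsc4 : P11_0 < P11_1)
    (f : ℝ → ℝ)
    (hf : ∀ p, f p = ((1 - p) * P01_0 + p * P01_1) /
      (1 - (1 - p) * P11_0 - p * P11_1 + (1 - p) * P01_0 + p * P01_1)) :
    MonotoneOn f (Set.Icc (0:ℝ) 1) := by
  obtain ⟨ha0, ha1⟩ := h01_0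
  obtain ⟨hb0, hb1⟩ := h01_1
  obtain ⟨hc0, hc1⟩ := h11_0
  obtain ⟨hd0, hd1⟩ := h11_1
  intro x hx y hy hxy
  obtain ⟨hx0, hx1⟩ := hx
  obtain ⟨hy0, hy1⟩ := hy
  rw [hf x, hf y]
  have hDx : 0 < 1 - (1 - x) * P11_0 - x * P11_1 + (1 - x) * P01_0 + x * P01_1 := by
    nlinarith [mul_nonneg hx0 (le_of_lt ha0), mul_nonneg (by linarith : (0:ℝ) ≤ 1 - x) (le_of_lt ha0)]
  have hDy : 0 < 1 - (1 - y) * P11_0 - y * P11_1 + (1 - y) * P01_0 + y * P01_1 := by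
    nlinarith [mul_nonneg hy0 (le_of_lt ha0), mul_nonneg (by linarith : (0:ℝ) ≤ 1 - y) (le_of_lt ha0)]
  rw [div_le_div_iff₀ hDx hDy]
  nlinarith [mul_nonneg (by linarith : (0:ℝ) ≤ y - x)
      (by nlinarith : (0:ℝ) ≤ (P01_1 - P01_0) * (1 - P11_0) + P01_0 * (P11_1 - P11_0))]
end

section
/- Let ℓ < u be reals, n a positive integer, and B a real with n*ℓ ≤ B < n*u. Define γ = ⌊(n*u - B)/(u - ℓ)⌋ and p' = B - γ*ℓ - (n - 1 - γ)*u. Then ℓ < p' ≤ u. -/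
theorem stmt_10 (ℓ u B : ℝ) (n : ℕ) (hn : 0 < n) (hlu : ℓ < u)
    (hB1 : n * ℓ ≤ B) (hB2 : B < n * u)
    (γ : ℤ) (hγ : γ = ⌊(n * u - B) / (u - ℓ)⌋)
    (p' : ℝ) (hp' : p' = B - γ * ℓ - ((n : ℝ) - 1 - γ) * u) :
    ℓ < p' ∧ p' ≤ u := by
  have hd : (0:ℝ) < u - ℓ := by linarith
  set x : ℝ := (n * u - B) / (u - ℓ) with hx
  have hxd : x * (u - ℓ) = n * u - B := by rw [hx, div_mul_cancel₀ _ hd.ne']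
  have h1 : (γ : ℝ) ≤ x := by rw [hγ]; exact Int.floor_le x
  have h2 : x < (γ : ℝ) + 1 := by rw [hγ]; exact Int.lt_floor_add_one x
  constructor <;> nlinarith [mul_le_mul_of_nonneg_right h1 hd.le,
    mul_lt_mul_of_pos_right h2 hd]
end
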